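/- arXiv:1509.03383 — 9 statements merged into one kernel-verified Lean document; each statement's English description precedes it below -/
import Mathlib

section
/- A subset S ⊆ A* is a semaphore code (i.e., of the form XA* \ A⁺XA* for some X ⊆ A*) if and only if S is a suffix code and SA ⊆ A*S. -/
/-- A suffix code: an antichain with respect to the suffix order (possibly empty). -/
def SuffixCode {A : Type*} (S : Set (List A)) : Prop :=
  ∀ u ∈ S, ∀ v ∈ S, u <:+ v → u = v

/-- The set `X A* \ A⁺ X A*`. -/
def semCodeOf {A : Type*} (X : Set (List A)) : Set (List A) :=
  {w | ∃ x ∈ X, ∃ u : List A, w = x ++ u} \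
    {w | ∃ v : List A, v ≠ [] ∧ ∃ x ∈ X, ∃ u : List A, w = v ++ x ++ u}

/-!
A word of `X A*` lies in `X A* \ A⁺ X A*` unless it has a shorter suffix in `X A*`,
so by descent on the length every word of `X A*` has a suffix in the semaphore code of `X`;
applied to `s a` this gives `S A ⊆ A* S`, and the suffix-code property is immediate.
Conversely, if `S A ⊆ A* S` then, letter by letter, every word of `S A*` has a suffix in `S`.
For a suffix code `S` this forces `S ∩ A⁺ S A* = ∅` and `S A* \ A⁺ S A* ⊆ S`,
so `S` is the semaphore code of itself.
-/

section

open List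

variable {A : Type*}

theorem suffixCode_semCodeOf (X : Set (List A)) : SuffixCode (semCodeOf X) := by
  rintro u ⟨⟨x, hx, p, rfl⟩, -⟩ v ⟨-, hv⟩ ⟨w, rfl⟩
  rcases eq_or_ne w [] with rfl | hw
  · rfl
  · exact absurd ⟨w, hw, x, hx, p, (append_assoc _ _ _).symm⟩ hv

theorem exists_suffix_mem_semCodeOf {X : Set (List A)} {x : List A} (hx : x ∈ X)
    (u : List A) : ∃ t ∈ semCodeOf X, t <:+ x ++ u := by
  by_cases hbad : ∃ v : List A, v ≠ [] ∧ ∃ y ∈ X, ∃ p : List A, x ++ u = v ++ y ++ p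
  · obtain ⟨v, hv, y, hy, p, hxu⟩ := hbad
    have : y.length + p.length < x.length + u.length := by
      have hv_pos := length_pos_iff.2 hv
      have hlen := congrArg length hxu
      simp only [length_append] at hlen
      omega
    obtain ⟨t, ht, hts⟩ := exists_suffix_mem_semCodeOf hy p
    exact ⟨t, ht, hts.trans ⟨v, by rw [hxu, append_assoc]⟩⟩
  · exact ⟨x ++ u, ⟨⟨x, hx, u, rfl⟩, hbad⟩, suffix_refl _⟩
termination_by (x ++ u).length

variable {S : Set (List A)}

theorem exists_suffix_mem_of_append_singleton
    (hS : ∀ s ∈ S, ∀ a : A, ∃ t ∈ S, t <:+ s ++ [a]) {x : List A} (hx : x ∈ S)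
    (u : List A) : ∃ t ∈ S, t <:+ x ++ u := by
  induction u using reverseRecOn with
  | nil => exact ⟨x, hx, by simp⟩
  | append_singleton u a ih =>
    obtain ⟨t, ht, v, hv⟩ := ih
    obtain ⟨t', ht', hs'⟩ := hS t ht a
    exact ⟨t', ht', hs'.trans ⟨v, by rw [← append_assoc, ← append_assoc, hv]⟩⟩

theorem semCodeOf_eq_self (hcode : SuffixCode S)
    (hS : ∀ s ∈ S, ∀ a : A, ∃ t ∈ S, t <:+ s ++ [a]) : semCodeOf S = S := by
  apply Set.Subset.antisymm
  · rintro w ⟨⟨x, hx, u, rfl⟩, hbad⟩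
    obtain ⟨t, ht, v, hv⟩ := exists_suffix_mem_of_append_singleton hS hx u
    rcases eq_or_ne v [] with rfl | hv0
    · rwa [← hv]
    · exact absurd ⟨v, hv0, t, ht, [], by rw [append_nil, hv]⟩ hbad
  · intro w hw
    refine ⟨⟨w, hw, [], (append_nil w).symm⟩, ?_⟩
    rintro ⟨v, hv, x, hx, u, rfl⟩
    obtain ⟨t, ht, hts⟩ := exists_suffix_mem_of_append_singleton hS hx u
    have htw : t = v ++ x ++ u := hcode t ht _ hw (hts.trans ⟨v, (append_assoc _ _ _).symm⟩)
    have hlen := hts.length_le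
    have hv_pos := length_pos_iff.2 hv
    simp only [htw, length_append] at hlen
    omega

end

theorem semaphore_iff_suffixCode_general {A : Type*}
    (S : Set (List A)) :
    (∃ X : Set (List A), S = semCodeOf X) ↔
      (SuffixCode S ∧ ∀ s ∈ S, ∀ a : A, ∃ t ∈ S, t <:+ s ++ [a]) := by
  constructor
  · rintro ⟨X, rfl⟩
    refine ⟨suffixCode_semCodeOf X, ?_⟩
    rintro s ⟨⟨x, hx, p, rfl⟩, -⟩ a
    simpa only [List.append_assoc] using exists_suffix_mem_semCodeOf hx (p ++ [a])
  · rintro ⟨hcode, hS⟩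
    exact ⟨S, (semCodeOf_eq_self hcode hS).symm⟩

/-- `S ⊆ A*` is a semaphore code (of the form `X A* \ A⁺ X A*` for some
`X ⊆ A*`) if and only if `S` is a suffix code and `S A ⊆ A* S`. -/
theorem semaphore_iff_suffixCode {A : Type*} [Fintype A] [Nonempty A]
    (S : Set (List A)) :
    (∃ X : Set (List A), S = semCodeOf X) ↔
      (SuffixCode S ∧ ∀ s ∈ S, ∀ a : A, ∃ t ∈ S, t <:+ s ++ [a]) :=
  semaphore_iff_suffixCode_general S
end

section
/- The maps I ↦ Iβ_ℓ (the set of suffix-minimal elements of I) and S ↦ A*S are mutually inverse order isomorphisms between the set of (two-sided) ideals of A* ordered by inclusion and the set of semaphore codes on A ordered by S ≤ S' iff A*S ⊆ A*S'. -/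
/-- A semaphore code: a suffix code `S` with `S A ⊆ A* S`. -/
def IsSemaphore {A : Type*} (S : Set (List A)) : Prop :=
  SuffixCode S ∧ ∀ s ∈ S, ∀ a : A, ∃ t ∈ S, t <:+ s ++ [a]

/-- A (two-sided) ideal of `A*` (possibly empty). -/
def IsIdeal {A : Type*} (I : Set (List A)) : Prop :=
  ∀ u v w : List A, w ∈ I → u ++ w ++ v ∈ I

/-- `I βℓ`: the suffix-minimal elements of `I`. -/
def suffMin {A : Type*} (I : Set (List A)) : Set (List A) :=
  {w ∈ I | ∀ v ∈ I, v <:+ w → v = w}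

/-- `A* S`. -/
def starMul {A : Type*} (S : Set (List A)) : Set (List A) :=
  {w | ∃ u : List A, ∃ s ∈ S, w = u ++ s}

/-!
An ideal `I` is recovered from its suffix-minimal elements because every word of `I` has a
shortest suffix in `I`, and that suffix lies in `I βℓ`; the right-ideal property then makes
`I βℓ` a semaphore code. Conversely, the semaphore condition pushes `A* S` through every
right multiplication by a letter, so `A* S` is an ideal, and since `S` is a suffix code its
suffix-minimal elements are exactly `S`. The order statement follows because `A* (I βℓ) = I`.
-/

section

variable {A : Type*}

theorem IsIdeal.append_left_mem {I : Set (List A)} (hI : IsIdeal I) (u : List A) {w : List A}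
    (hw : w ∈ I) : u ++ w ∈ I := by
  simpa using hI u [] w hw

theorem IsIdeal.append_right_mem {I : Set (List A)} (hI : IsIdeal I) {w : List A} (hw : w ∈ I)
    (v : List A) : w ++ v ∈ I := by
  simpa using hI [] v w hw

theorem suffixCode_suffMin (I : Set (List A)) : SuffixCode (suffMin I) :=
  fun u hu _ hv huv => hv.2 u hu.1 huv

theorem exists_suffMin_suffix {I : Set (List A)} {w : List A} (hw : w ∈ I) :
    ∃ s ∈ suffMin I, s <:+ w := by
  obtain ⟨s, ⟨hsI, hsw⟩, hshortest⟩ :=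
    (measure List.length).wf.has_min {v | v ∈ I ∧ v <:+ w} ⟨w, hw, List.suffix_refl w⟩
  refine ⟨s, ⟨hsI, fun v hvI hvs => hvs.eq_of_length ?_⟩, hsw⟩
  have := hshortest v ⟨hvI, hvs.trans hsw⟩
  exact le_antisymm hvs.length_le (not_lt.mp this)

theorem starMul_suffMin_of_append_left_mem {I : Set (List A)}
    (hI : ∀ u, ∀ w ∈ I, u ++ w ∈ I) : starMul (suffMin I) = I := by
  ext w
  constructor
  · rintro ⟨u, s, hs, rfl⟩
    exact hI u s hs.1
  · intro hw
    obtain ⟨s, hs, u, rfl⟩ := exists_suffMin_suffix hw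
    exact ⟨u, s, hs, rfl⟩

theorem IsIdeal.isSemaphore_suffMin {I : Set (List A)} (hI : IsIdeal I) :
    IsSemaphore (suffMin I) :=
  ⟨suffixCode_suffMin I, fun _ hs a => exists_suffMin_suffix (hI.append_right_mem hs.1 [a])⟩

theorem subset_starMul (S : Set (List A)) : S ⊆ starMul S := fun s hs => ⟨[], s, hs, rfl⟩

theorem append_left_mem_starMul {S : Set (List A)} (u : List A) {w : List A}
    (hw : w ∈ starMul S) : u ++ w ∈ starMul S := by
  obtain ⟨u', s, hs, rfl⟩ := hw
  exact ⟨u ++ u', s, hs, by rw [List.append_assoc]⟩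

theorem IsSemaphore.append_right_mem_starMul {S : Set (List A)} (hS : IsSemaphore S)
    {w : List A} (hw : w ∈ starMul S) (v : List A) : w ++ v ∈ starMul S := by
  induction v generalizing w with
  | nil => simpa using hw
  | cons a v ih =>
    have hwa : w ++ [a] ∈ starMul S := by
      obtain ⟨u, s, hs, rfl⟩ := hw
      obtain ⟨t, ht, u', hu'⟩ := hS.2 s hs a
      exact ⟨u ++ u', t, ht, by rw [List.append_assoc, ← hu', List.append_assoc]⟩
    simpa using ih hwa

theorem IsSemaphore.isIdeal_starMul {S : Set (List A)} (hS : IsSemaphore S) :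
    IsIdeal (starMul S) := fun u v _ hw =>
  hS.append_right_mem_starMul (append_left_mem_starMul u hw) v

theorem SuffixCode.suffMin_starMul {S : Set (List A)} (hS : SuffixCode S) :
    suffMin (starMul S) = S := by
  ext w
  constructor
  · rintro ⟨⟨u, s, hs, rfl⟩, hmin⟩
    rwa [← hmin s (subset_starMul S hs) (List.suffix_append u s)]
  · intro hw
    refine ⟨subset_starMul S hw, ?_⟩
    rintro v ⟨u, t, ht, rfl⟩ hvw
    obtain rfl := hS t ht w hw ((List.suffix_append u t).trans hvw)
    exact hvw.eq_of_length (le_antisymm hvw.length_le (by simp))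

end

theorem ideal_semaphore_order_iso_general {A : Type*} :
    (∀ I : Set (List A), IsIdeal I → IsSemaphore (suffMin I) ∧ starMul (suffMin I) = I) ∧
    (∀ S : Set (List A), IsSemaphore S → IsIdeal (starMul S) ∧ suffMin (starMul S) = S) ∧
    (∀ I J : Set (List A), IsIdeal I → IsIdeal J →
      (I ⊆ J ↔ starMul (suffMin I) ⊆ starMul (suffMin J))) := by
  have starMul_suffMin {I : Set (List A)} (hI : IsIdeal I) : starMul (suffMin I) = I :=
    starMul_suffMin_of_append_left_mem fun u _ hw => hI.append_left_mem u hw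
  refine ⟨fun I hI => ⟨hI.isSemaphore_suffMin, starMul_suffMin hI⟩,
    fun S hS => ⟨hS.isIdeal_starMul, hS.1.suffMin_starMul⟩, fun I J hI hJ => ?_⟩
  rw [starMul_suffMin hI, starMul_suffMin hJ]

/-- `I ↦ I βℓ` and `S ↦ A* S` are mutually inverse order isomorphisms
between the ideals of `A*` (ordered by inclusion) and the semaphore codes on `A`
(ordered by `S ≤ S'` iff `A*S ⊆ A*S'`). -/
theorem ideal_semaphore_order_iso {A : Type*} [Fintype A] [Nonempty A] :
    (∀ I : Set (List A), IsIdeal I → IsSemaphore (suffMin I) ∧ starMul (suffMin I) = I) ∧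
    (∀ S : Set (List A), IsSemaphore S → IsIdeal (starMul S) ∧ suffMin (starMul S) = S) ∧
    (∀ I J : Set (List A), IsIdeal I → IsIdeal J →
      (I ⊆ J ↔ starMul (suffMin I) ⊆ starMul (suffMin J))) :=
  ideal_semaphore_order_iso_general
end

section
/- If Γ and Γ' are strongly connected, deterministic, complete A-graphs such that there exist graph morphisms Γ → Γ' and Γ' → Γ, then Γ and Γ' are isomorphic. -/
/-!
Along a path out of an image vertex, completeness of the source and determinism of the target
keep every vertex reached in the image, so a morphism into a strongly connected graph is
surjective. Mutual surjections between finite sets are bijections, and determinism makes the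
inverse of a bijective morphism again a morphism.
-/

namespace AGraph

variable {A Q Q' : Type*}

def Deterministic (E : Q → A → Q → Prop) : Prop :=
  ∀ p a q r, E p a q → E p a r → q = r

def Complete (E : Q → A → Q → Prop) : Prop :=
  ∀ p a, ∃ q, E p a q

def StronglyConnected (E : Q → A → Q → Prop) : Prop :=
  ∀ p q : Q, Relation.ReflTransGen (fun x y => ∃ a, E x a y) p q

def IsMorphism (E : Q → A → Q → Prop) (E' : Q' → A → Q' → Prop) (φ : Q → Q') : Prop :=
  ∀ p a q, E p a q → E' (φ p) a (φ q)

variable {E : Q → A → Q → Prop} {E' : Q' → A → Q' → Prop} {φ : Q → Q'}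

theorem IsMorphism.exists_eq_of_edge (hφ : IsMorphism E E' φ) (hcomp : Complete E)
    (hdet' : Deterministic E') {p : Q} {a : A} {q' : Q'} (h : E' (φ p) a q') :
    ∃ q, E p a q ∧ φ q = q' := by
  obtain ⟨q, hq⟩ := hcomp p a
  exact ⟨q, hq, hdet' _ _ _ _ (hφ _ _ _ hq) h⟩

theorem IsMorphism.surjective [Nonempty Q] (hφ : IsMorphism E E' φ) (hcomp : Complete E)
    (hdet' : Deterministic E') (hsc' : StronglyConnected E') : Function.Surjective φ := by
  intro q'
  obtain ⟨p⟩ := ‹Nonempty Q›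
  induction hsc' (φ p) q' with
  | refl => exact ⟨p, rfl⟩
  | tail _ hedge ih =>
    obtain ⟨u, rfl⟩ := ih
    obtain ⟨a, ha⟩ := hedge
    obtain ⟨v, -, hv⟩ := hφ.exists_eq_of_edge hcomp hdet' ha
    exact ⟨v, hv⟩

theorem IsMorphism.symm {θ : Q ≃ Q'} (hθ : IsMorphism E E' θ) (hcomp : Complete E)
    (hdet' : Deterministic E') : IsMorphism E' E θ.symm := by
  intro p' a q' h
  rw [← θ.apply_symm_apply p'] at h
  obtain ⟨q, hq, rfl⟩ := hθ.exists_eq_of_edge hcomp hdet' h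
  simpa using hq

end AGraph

open AGraph in
theorem aGraph_iso_of_mutual_morphisms_general {A Q Q' : Type*}
    [Fintype Q] [Nonempty Q] [Fintype Q']
    (E : Q → A → Q → Prop) (E' : Q' → A → Q' → Prop)
    (hdet : ∀ p a q r, E p a q → E p a r → q = r)
    (hdet' : ∀ p a q r, E' p a q → E' p a r → q = r)
    (hcomp : ∀ p a, ∃ q, E p a q)
    (hcomp' : ∀ p a, ∃ q, E' p a q)
    (hsc : ∀ p q : Q, Relation.ReflTransGen (fun x y => ∃ a, E x a y) p q)
    (hsc' : ∀ p q : Q', Relation.ReflTransGen (fun x y => ∃ a, E' x a y) p q)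
    (φ : Q → Q') (hφ : ∀ p a q, E p a q → E' (φ p) a (φ q))
    (ψ : Q' → Q) (hψ : ∀ p a q, E' p a q → E (ψ p) a (ψ q)) :
    ∃ θ : Q ≃ Q', (∀ p a q, E p a q → E' (θ p) a (θ q)) ∧
      (∀ p a q, E' p a q → E (θ.symm p) a (θ.symm q)) := by
  have : Nonempty Q' := .map φ ‹_›
  have hφ_surj : Function.Surjective φ := IsMorphism.surjective hφ hcomp hdet' hsc'
  have hψ_surj : Function.Surjective ψ := IsMorphism.surjective hψ hcomp' hdet hsc
  have hcard : Fintype.card Q = Fintype.card Q' :=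
    (Fintype.card_le_of_surjective ψ hψ_surj).antisymm (Fintype.card_le_of_surjective φ hφ_surj)
  let θ := Equiv.ofBijective φ ((Fintype.bijective_iff_surjective_and_card φ).2 ⟨hφ_surj, hcard⟩)
  exact ⟨θ, hφ, IsMorphism.symm (θ := θ) hφ hcomp hdet'⟩

/-- if `Γ` and `Γ'` are strongly connected, deterministic, complete
`A`-graphs such that there exist graph morphisms `Γ → Γ'` and `Γ' → Γ`, then
`Γ` and `Γ'` are isomorphic. -/
theorem aGraph_iso_of_mutual_morphisms {A Q Q' : Type*}
    [Fintype Q] [Nonempty Q] [Fintype Q'] [Nonempty Q']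
    (E : Q → A → Q → Prop) (E' : Q' → A → Q' → Prop)
    (hdet : ∀ p a q r, E p a q → E p a r → q = r)
    (hdet' : ∀ p a q r, E' p a q → E' p a r → q = r)
    (hcomp : ∀ p a, ∃ q, E p a q)
    (hcomp' : ∀ p a, ∃ q, E' p a q)
    (hsc : ∀ p q : Q, Relation.ReflTransGen (fun x y => ∃ a, E x a y) p q)
    (hsc' : ∀ p q : Q', Relation.ReflTransGen (fun x y => ∃ a, E' x a y) p q)
    (φ : Q → Q') (hφ : ∀ p a q, E p a q → E' (φ p) a (φ q))
    (ψ : Q' → Q) (hψ : ∀ p a q, E' p a q → E (ψ p) a (ψ q)) :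
    ∃ θ : Q ≃ Q', (∀ p a q, E p a q → E' (θ p) a (θ q)) ∧
      (∀ p a q, E' p a q → E (θ.symm p) a (θ.symm q)) :=
  aGraph_iso_of_mutual_morphisms_general E E' hdet hdet' hcomp hcomp' hsc hsc' φ hφ ψ hψ
end

section
/- For |A| > 1 and left ideals L, L' of A* both containing A^k, we have τ_L ⊆ τ_{L'} if and only if L ⊆ L'. -/
/-
If `w ∈ L` is at least `k` long, its length-`k` suffix lies in `L'`, hence so does `w`. If `w` is
shorter, pad it on the left to length `k` once with a letter `a` and once with a letter `b ≠ a`.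
The padded words are `τ_L`-related through `w`, so they share a suffix `s ∈ L'`; since the paddings
differ in their last letter, `s` is a suffix of `w`, and `w ∈ L'` because `L'` is a left ideal.
-/

/-- The relation `τ_L`: `u` and `v` have a common suffix in `L`. -/
def tauRel {A : Type*} (L : Set (List A)) (u v : List A) : Prop :=
  ∃ w ∈ L, w <:+ u ∧ w <:+ v

namespace List

theorem eq_nil_of_suffix_replicate_of_suffix_replicate {A : Type*} {t : List A} {m n : ℕ}
    {a b : A} (hab : a ≠ b) (ha : t <:+ replicate m a) (hb : t <:+ replicate n b) : t = [] := by
  rw [suffix_replicate_iff] at ha hb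
  have hrep := ha.2.symm.trans hb.2
  rw [replicate_inj] at hrep
  exact length_eq_zero_iff.1 (hrep.2.resolve_right hab)

theorem suffix_of_suffix_replicate_append {A : Type*} {s w : List A} {m n : ℕ} {a b : A}
    (hab : a ≠ b) (ha : s <:+ replicate m a ++ w) (hb : s <:+ replicate n b ++ w) :
    s <:+ w := by
  rcases suffix_or_suffix_of_suffix ha (suffix_append _ _) with hsw | ⟨t, rfl⟩
  · exact hsw
  · rw [suffix_append_self_iff] at ha hb
    rw [eq_nil_of_suffix_replicate_of_suffix_replicate hab ha hb, nil_append]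

end List

section TauRel

variable {A : Type*}

theorem tauRel_mono {L L' : Set (List A)} (h : L ⊆ L') {u v : List A} :
    tauRel L u v → tauRel L' u v
  | ⟨w, hw, hu, hv⟩ => ⟨w, h hw, hu, hv⟩

section LeftIdeal

variable {L : Set (List A)} (hL : ∀ u w : List A, w ∈ L → u ++ w ∈ L)
include hL

theorem mem_of_suffix_mem {s w : List A} (hs : s ∈ L) (hsw : s <:+ w) : w ∈ L := by
  obtain ⟨t, rfl⟩ := hsw
  exact hL t s hs

theorem mem_of_length_le {k : ℕ} (hLk : ∀ w : List A, w.length = k → w ∈ L) {w : List A}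
    (hw : k ≤ w.length) : w ∈ L :=
  mem_of_suffix_mem hL (hLk _ (by simp [Nat.sub_sub_self hw])) (w.drop_suffix (w.length - k))

theorem mem_of_tauRel_replicate_append {w : List A} {m n : ℕ} {a b : A} (hab : a ≠ b)
    (h : tauRel L (List.replicate m a ++ w) (List.replicate n b ++ w)) : w ∈ L := by
  obtain ⟨s, hs, ha, hb⟩ := h
  exact mem_of_suffix_mem hL hs (List.suffix_of_suffix_replicate_append hab ha hb)

end LeftIdeal

end TauRel

theorem tauRel_subset_iff_general {A : Type*} [Fintype A] (hA : 1 < Fintype.card A)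
    (k : ℕ) (L L' : Set (List A))
    (hL' : ∀ u w : List A, w ∈ L' → u ++ w ∈ L')
    (hLk' : ∀ w : List A, w.length = k → w ∈ L') :
    (∀ u v : List A, u.length = k → v.length = k → tauRel L u v → tauRel L' u v)
      ↔ L ⊆ L' := by
  refine ⟨fun h w hw => ?_, fun h u v _ _ => tauRel_mono h⟩
  rcases le_or_gt k w.length with hkw | hwk
  · exact mem_of_length_le hL' hLk' hkw
  · obtain ⟨a, b, hab⟩ := Fintype.exists_pair_of_one_lt_card hA
    have hpad : ∀ c : A, (List.replicate (k - w.length) c ++ w).length = k := by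
      intro c; simp only [List.length_append, List.length_replicate]; omega
    refine mem_of_tauRel_replicate_append hL' hab (h _ _ (hpad a) (hpad b) ?_)
    exact ⟨w, hw, List.suffix_append _ _, List.suffix_append _ _⟩

/-- for `|A| > 1` and left ideals `L, L'` of `A*` both containing `A^k`,
`τ_L ⊆ τ_{L'}` if and only if `L ⊆ L'`. -/
theorem tauRel_subset_iff {A : Type*} [Fintype A] (hA : 1 < Fintype.card A)
    (k : ℕ) (hk : 1 ≤ k) (L L' : Set (List A))
    (hL : ∀ u w : List A, w ∈ L → u ++ w ∈ L)
    (hL' : ∀ u w : List A, w ∈ L' → u ++ w ∈ L')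
    (hLk : ∀ w : List A, w.length = k → w ∈ L)
    (hLk' : ∀ w : List A, w.length = k → w ∈ L') :
    (∀ u v : List A, u.length = k → v.length = k → tauRel L u v → tauRel L' u v)
      ↔ L ⊆ L' :=
  tauRel_subset_iff_general hA k L L' hL' hLk'
end

section
/- The map I ↦ τ_I is a lattice isomorphism from the lattice of ideals of A* containing A^k (ordered by inclusion, with meet = intersection and join = union) onto the lattice of special right congruences on A^k. -/
/-- Words of length `k` over `A`. -/
abbrev Word (A : Type*) (k : ℕ) := {w : List A // w.length = k}

/-- The shift action of a letter: `u.a` is the suffix of length `k` of `u a`. -/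
def act {A : Type*} (k : ℕ) (a : A) (u : Word A k) : Word A k :=
  ⟨(u.val ++ [a]).drop ((u.val ++ [a]).length - k), by
    have h := u.2
    simp only [List.length_drop, List.length_append, List.length_cons,
      List.length_nil, h]
    omega⟩

/-- A right congruence on `A^k`: an equivalence relation compatible with the
shift action. -/
def IsRC {A : Type*} (k : ℕ) (r : Word A k → Word A k → Prop) : Prop :=
  Equivalence r ∧ ∀ u v : Word A k, r u v → ∀ a : A, r (act k a u) (act k a v)

/-- The relation `τ_I` on `A^k`: a common suffix in `I`. -/
def tauW {A : Type*} (k : ℕ) (I : Set (List A)) (u v : Word A k) : Prop :=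
  ∃ w ∈ I, w <:+ u.val ∧ w <:+ v.val

/-- Ideals of `A*` containing `A^k`. -/
def IsIdealK {A : Type*} (k : ℕ) (I : Set (List A)) : Prop :=
  (∀ u v w : List A, w ∈ I → u ++ w ++ v ∈ I) ∧ (∀ w : List A, w.length = k → w ∈ I)

/-!
A common suffix of two words of `A^k` lying in `I` can always be extended by the shift letter,
by the right ideal property, unless it is the whole word; so `τ_I` is a right congruence.
Conversely `I` is recovered from `τ_I`: a word `w` of length `< k` is the longest common suffix
of the words `aᵐw` and `bᵐw` of length `k` built from distinct letters `a ≠ b`, so `w` lies in any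
ideal `J` with `τ_I ≤ τ_J`, since `J` is closed under adding prefixes. Meets are
preserved because the suffixes of a word are totally ordered.
-/

theorem List.suffix_of_suffix_append_cons {α : Type*} {x w p q : List α} {a b : α}
    (hab : a ≠ b) (hp : x <:+ p ++ a :: w) (hq : x <:+ q ++ b :: w) : x <:+ w := by
  have not_suffix : ¬ a :: w <:+ q ++ b :: w := fun h => by
    have hsuf := List.suffix_of_suffix_length_le h (List.suffix_append q (b :: w)) (by simp)
    exact hab (List.cons.inj (hsuf.eq_of_length (by simp))).1
  rcases List.suffix_or_suffix_of_suffix hp (List.suffix_append p (a :: w)) with hx | hx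
  · rcases List.suffix_cons_iff.1 hx with rfl | hx
    · exact absurd hq not_suffix
    · exact hx
  · exact absurd (hx.trans hq) not_suffix

section

variable {A : Type*} {k : ℕ} {I J : Set (List A)}

theorem act_val (a : A) (u : Word A k) : (act k a u).val = (u.val ++ [a]).drop 1 := by
  simp [act, u.2]

theorem IsIdealK.mem_of_suffix (hI : IsIdealK k I) {w w' : List A} (h : w' <:+ w)
    (hw' : w' ∈ I) : w ∈ I := by
  obtain ⟨p, rfl⟩ := h
  simpa using hI.1 p [] w' hw'

theorem IsIdealK.append_mem (hI : IsIdealK k I) {w : List A} (hw : w ∈ I) (v : List A) :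
    w ++ v ∈ I := by
  simpa using hI.1 [] v w hw

theorem IsIdealK.mem_of_le_length (hI : IsIdealK k I) {w : List A} (hw : k ≤ w.length) :
    w ∈ I :=
  hI.mem_of_suffix (List.drop_suffix (w.length - k) w) (hI.2 _ (by simp; omega))

theorem tauW_refl (hI : IsIdealK k I) (u : Word A k) : tauW k I u u :=
  ⟨u.val, hI.2 u.val u.2, List.suffix_refl _, List.suffix_refl _⟩

theorem tauW_symm {u v : Word A k} : tauW k I u v → tauW k I v u :=
  fun ⟨w, hw, hu, hv⟩ => ⟨w, hw, hv, hu⟩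

theorem tauW_trans {u v t : Word A k} : tauW k I u v → tauW k I v t → tauW k I u t := by
  rintro ⟨w₁, hw₁, hu₁, hv₁⟩ ⟨w₂, hw₂, hv₂, ht₂⟩
  rcases List.suffix_or_suffix_of_suffix hv₁ hv₂ with h | h
  · exact ⟨w₁, hw₁, hu₁, h.trans ht₂⟩
  · exact ⟨w₂, hw₂, h.trans hu₁, ht₂⟩

theorem tauW_act (hI : IsIdealK k I) {u v : Word A k} (h : tauW k I u v) (a : A) :
    tauW k I (act k a u) (act k a v) := by
  obtain ⟨w, hw, hu, hv⟩ := h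
  rcases hu.length_le.lt_or_eq with hlt | heq
  · have shift {x : Word A k} (hx : w <:+ x.val) : w ++ [a] <:+ (act k a x).val := by
      rw [act_val]
      exact List.suffix_of_suffix_length_le (List.suffix_append_self_iff.2 hx)
        (List.drop_suffix 1 _) (by simp [x.2]; omega)
    exact ⟨w ++ [a], hI.append_mem hw [a], shift hu, shift hv⟩
  · have huv : u = v :=
      Subtype.ext ((hu.eq_of_length heq).symm.trans (hv.eq_of_length (by rw [heq, u.2, v.2])))
    exact huv ▸ tauW_refl hI _

theorem isRC_tauW (hI : IsIdealK k I) : IsRC k (tauW k I) :=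
  ⟨⟨tauW_refl hI, tauW_symm, tauW_trans⟩, fun _ _ h a => tauW_act hI h a⟩

theorem tauW_mono (hIJ : I ⊆ J) {u v : Word A k} : tauW k I u v → tauW k J u v :=
  fun ⟨w, hw, hu, hv⟩ => ⟨w, hIJ hw, hu, hv⟩

theorem subset_of_tauW_le [Fintype A] (hA : 1 < Fintype.card A) (hJ : IsIdealK k J)
    (h : ∀ u v : Word A k, tauW k I u v → tauW k J u v) : I ⊆ J := by
  intro w hw
  rcases le_or_gt k w.length with hlen | hlen
  · exact hJ.mem_of_le_length hlen
  obtain ⟨a, b, hab⟩ := Fintype.exists_pair_of_one_lt_card hA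
  have word (c : A) : (List.replicate (k - w.length - 1) c ++ c :: w).length = k := by
    simp; omega
  obtain ⟨w', hw', hu, hv⟩ := h ⟨_, word a⟩ ⟨_, word b⟩
    ⟨w, hw, List.suffix_append_of_suffix (List.suffix_cons a w),
      List.suffix_append_of_suffix (List.suffix_cons b w)⟩
  exact hJ.mem_of_suffix (List.suffix_of_suffix_append_cons hab hu hv) hw'

theorem tauW_inter (hI : IsIdealK k I) (hJ : IsIdealK k J) (u v : Word A k) :
    tauW k (I ∩ J) u v ↔ tauW k I u v ∧ tauW k J u v := by
  refine ⟨fun h => ⟨tauW_mono Set.inter_subset_left h, tauW_mono Set.inter_subset_right h⟩, ?_⟩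
  rintro ⟨⟨w₁, hw₁, hu₁, hv₁⟩, ⟨w₂, hw₂, hu₂, hv₂⟩⟩
  rcases List.suffix_or_suffix_of_suffix hu₁ hu₂ with h | h
  · exact ⟨w₂, ⟨hI.mem_of_suffix h hw₁, hw₂⟩, hu₂, hv₂⟩
  · exact ⟨w₁, ⟨hw₁, hJ.mem_of_suffix h hw₂⟩, hu₁, hv₁⟩

theorem tauW_union (u v : Word A k) :
    tauW k (I ∪ J) u v ↔ tauW k I u v ∨ tauW k J u v := by
  simp only [tauW, Set.mem_union, or_and_right, exists_or]

end

theorem tauW_lattice_iso_general {A : Type*} [Fintype A] (hA : 1 < Fintype.card A)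
    (k : ℕ) :
    -- each `τ_I` is a (special) right congruence
    (∀ I : Set (List A), IsIdealK k I → IsRC k (tauW k I)) ∧
    -- the map is an order isomorphism (in particular injective)
    (∀ I J : Set (List A), IsIdealK k I → IsIdealK k J →
      (I ⊆ J ↔ ∀ u v : Word A k, tauW k I u v → tauW k J u v)) ∧
    -- meets are preserved
    (∀ I J : Set (List A), IsIdealK k I → IsIdealK k J →
      ∀ u v : Word A k, tauW k (I ∩ J) u v ↔ tauW k I u v ∧ tauW k J u v) ∧
    -- joins are preserved (the join in `RC(A^k)` of `τ_I` and `τ_J` is their union)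
    (∀ I J : Set (List A), IsIdealK k I → IsIdealK k J →
      ∀ u v : Word A k, tauW k (I ∪ J) u v ↔ tauW k I u v ∨ tauW k J u v) :=
  ⟨fun _ hI => isRC_tauW hI,
    fun _ _ _ hJ => ⟨fun hIJ _ _ => tauW_mono hIJ, subset_of_tauW_le hA hJ⟩,
    fun _ _ hI hJ => tauW_inter hI hJ,
    fun _ _ _ _ => tauW_union⟩

/-- `I ↦ τ_I` is a lattice isomorphism from the lattice of ideals of
`A*` containing `A^k` (ordered by inclusion, meet = `∩`, join = `∪`) onto the
lattice of special right congruences on `A^k`. -/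
theorem tauW_lattice_iso {A : Type*} [Fintype A] (hA : 1 < Fintype.card A)
    (k : ℕ) (hk : 1 ≤ k) :
    -- each `τ_I` is a (special) right congruence
    (∀ I : Set (List A), IsIdealK k I → IsRC k (tauW k I)) ∧
    -- the map is an order isomorphism (in particular injective)
    (∀ I J : Set (List A), IsIdealK k I → IsIdealK k J →
      (I ⊆ J ↔ ∀ u v : Word A k, tauW k I u v → tauW k J u v)) ∧
    -- meets are preserved
    (∀ I J : Set (List A), IsIdealK k I → IsIdealK k J →
      ∀ u v : Word A k, tauW k (I ∩ J) u v ↔ tauW k I u v ∧ tauW k J u v) ∧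
    -- joins are preserved (the join in `RC(A^k)` of `τ_I` and `τ_J` is their union)
    (∀ I J : Set (List A), IsIdealK k I → IsIdealK k J →
      ∀ u v : Word A k, tauW k (I ∪ J) u v ↔ tauW k I u v ∨ tauW k J u v) :=
  tauW_lattice_iso_general hA k
end

section
/- Let |A| > 1, ρ a right congruence on A^k, and I an ideal of A* containing A^k. Then ρ ⊆ τ_I if and only if Λ_ρ ⊆ I (equivalently Λ'_ρ ⊆ I), and τ_I ⊆ ρ if and only if I ⊆ Res(ρ). -/
/-- `w` is the longest common suffix of `u` and `v`. -/
def IsLcs {A : Type*} (u v w : List A) : Prop :=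
  w <:+ u ∧ w <:+ v ∧ ∀ w' : List A, w' <:+ u → w' <:+ v → w' <:+ w

/-- `w` is the longest common suffix of the `ρ`-class of `u`. -/
def IsLcsClass {A : Type*} {k : ℕ} (ρ : Word A k → Word A k → Prop)
    (u : Word A k) (w : List A) : Prop :=
  (∀ v : Word A k, ρ u v → w <:+ v.val) ∧
    ∀ w' : List A, (∀ v : Word A k, ρ u v → w' <:+ v.val) → w' <:+ w

/-- `Λ_ρ = { lcs(C) : C ∈ A^k/ρ }`. -/
def Lam {A : Type*} {k : ℕ} (ρ : Word A k → Word A k → Prop) : Set (List A) :=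
  {w | ∃ u : Word A k, IsLcsClass ρ u w}

/-- `Λ'_ρ = { lcs(u,v) : (u,v) ∈ ρ }`. -/
def Lam' {A : Type*} {k : ℕ} (ρ : Word A k → Word A k → Prop) : Set (List A) :=
  {w | ∃ u v : Word A k, ρ u v ∧ IsLcs u.val v.val w}

/-- `Res(ρ)`: words `w` such that all `u, v ∈ A^k` having suffix `w` are
`ρ`-equivalent. -/
def ResSuf {A : Type*} (k : ℕ) (ρ : Word A k → Word A k → Prop) : Set (List A) :=
  {w | ∀ u v : Word A k, w <:+ u.val → w <:+ v.val → ρ u v}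

theorem List.exists_longest_common_suffix {α : Type*} (S : Set (List α)) {u : List α}
    (hu : u ∈ S) :
    ∃ w, (∀ s ∈ S, w <:+ s) ∧ ∀ w', (∀ s ∈ S, w' <:+ s) → w' <:+ w := by
  classical
  let P (n : ℕ) : Prop := ∃ w : List α, (∀ s ∈ S, w <:+ s) ∧ w.length = n
  obtain ⟨w, hw, hlen⟩ : P (Nat.findGreatest P u.length) :=
    Nat.findGreatest_spec (Nat.zero_le _) ⟨[], fun s _ => List.nil_suffix, rfl⟩
  refine ⟨w, hw, fun w' hw' => List.suffix_of_suffix_length_le (hw' u hu) (hw u hu) ?_⟩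
  rw [hlen]
  exact Nat.le_findGreatest (hw' u hu).length_le ⟨w', hw', rfl⟩

section LongestCommonSuffix

variable {A : Type*} {k : ℕ} {ρ : Word A k → Word A k → Prop} {I : Set (List A)}

theorem exists_isLcs (u v : List A) : ∃ w, IsLcs u v w := by
  obtain ⟨w, hw, hmax⟩ := List.exists_longest_common_suffix {u, v} (Set.mem_insert u {v})
  exact ⟨w, hw u (by simp), hw v (by simp), fun w' hu hv => hmax w' (by simp [hu, hv])⟩

theorem IsLcsClass.unique {u : Word A k} {w w' : List A} (hw : IsLcsClass ρ u w)
    (hw' : IsLcsClass ρ u w') : w = w' :=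
  (hw'.2 w hw.1).sublist.antisymm (hw.2 w' hw'.1).sublist

/-- Take `v` in the class of `u` minimising the length of `lcs(u, v)`: as the suffixes of `u` are
linearly ordered, this `lcs(u, v)` is a suffix of every `lcs(u, v')`. -/
theorem exists_isLcs_isLcsClass {u : Word A k} (hu : ρ u u) :
    ∃ v w, ρ u v ∧ IsLcs u.val v.val w ∧ IsLcsClass ρ u w := by
  classical
  have hP : ∃ n v w, ρ u v ∧ IsLcs u.val v.val w ∧ w.length = n := by
    obtain ⟨w, hw⟩ := exists_isLcs u.val u.val
    exact ⟨_, u, w, hu, hw, rfl⟩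
  obtain ⟨v₀, w₀, hv₀, hw₀, hlen⟩ := Nat.find_spec hP
  refine ⟨v₀, w₀, hv₀, hw₀, fun v hv => ?_, fun w' hw' => hw₀.2.2 w' (hw' u hu) (hw' v₀ hv₀)⟩
  obtain ⟨w, hw⟩ := exists_isLcs u.val v.val
  have hle : w₀.length ≤ w.length := hlen ▸ Nat.find_min' hP ⟨v, w, hv, hw, rfl⟩
  exact (List.suffix_of_suffix_length_le hw₀.1 hw.1 hle).trans hw.2.1

theorem lam_subset_lam' (hρ : ∀ u, ρ u u) : Lam ρ ⊆ Lam' ρ := by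
  rintro w ⟨u, hw⟩
  obtain ⟨v, w₀, huv, hw₀, hcls⟩ := exists_isLcs_isLcsClass (hρ u)
  exact ⟨u, v, huv, hw.unique hcls ▸ hw₀⟩

theorem tauW_iff_of_isLcs (hI : ∀ p w, w ∈ I → p ++ w ∈ I) {u v : Word A k} {w : List A}
    (h : IsLcs u.val v.val w) : tauW k I u v ↔ w ∈ I := by
  constructor
  · rintro ⟨w', hw'I, hu, hv⟩
    obtain ⟨p, rfl⟩ := h.2.2 w' hu hv
    exact hI p w' hw'I
  · exact fun hw => ⟨w, hw, h.1, h.2.1⟩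

theorem le_tauW_iff_lam'_subset (hI : ∀ p w, w ∈ I → p ++ w ∈ I) :
    ρ ≤ tauW k I ↔ Lam' ρ ⊆ I := by
  constructor
  · rintro h w ⟨u, v, huv, hw⟩
    exact (tauW_iff_of_isLcs hI hw).1 (h u v huv)
  · intro h u v huv
    obtain ⟨w, hw⟩ := exists_isLcs u.val v.val
    exact (tauW_iff_of_isLcs hI hw).2 (h ⟨u, v, huv, hw⟩)

theorem le_tauW_of_lam_subset (hρ : ∀ u, ρ u u) (h : Lam ρ ⊆ I) : ρ ≤ tauW k I := by
  intro u v huv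
  obtain ⟨-, w, -, -, hcls⟩ := exists_isLcs_isLcsClass (hρ u)
  exact ⟨w, h ⟨u, hcls⟩, hcls.1 u (hρ u), hcls.1 v huv⟩

theorem tauW_le_iff_subset_resSuf : tauW k I ≤ ρ ↔ I ⊆ ResSuf k ρ :=
  ⟨fun h _ hw u v hu hv => h u v ⟨_, hw, hu, hv⟩,
    fun h _ _ ⟨_, hw, hu, hv⟩ => h hw _ _ hu hv⟩

end LongestCommonSuffix

theorem rc_vs_tau_inclusions_general {A : Type*}
    (k : ℕ) (ρ : Word A k → Word A k → Prop) (hρ : IsRC k ρ)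
    (I : Set (List A))
    (hI : ∀ u v w : List A, w ∈ I → u ++ w ++ v ∈ I) :
    ((∀ u v : Word A k, ρ u v → tauW k I u v) ↔ Lam ρ ⊆ I) ∧
    ((∀ u v : Word A k, ρ u v → tauW k I u v) ↔ Lam' ρ ⊆ I) ∧
    ((∀ u v : Word A k, tauW k I u v → ρ u v) ↔ I ⊆ ResSuf k ρ) := by
  have hrefl : ∀ u, ρ u u := hρ.1.refl
  have hsuf : ∀ p w, w ∈ I → p ++ w ∈ I := fun p w hw => by simpa using hI p [] w hw
  have hlam' : ρ ≤ tauW k I ↔ Lam' ρ ⊆ I := le_tauW_iff_lam'_subset hsuf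
  exact ⟨⟨fun h => (lam_subset_lam' hrefl).trans (hlam'.1 h), le_tauW_of_lam_subset hrefl⟩,
    hlam', tauW_le_iff_subset_resSuf⟩

/-- for `|A| > 1`, a right congruence `ρ` on `A^k` and an ideal
`I ⊇ A^k` of `A*`: `ρ ⊆ τ_I ↔ Λ_ρ ⊆ I ↔ Λ'_ρ ⊆ I`, and `τ_I ⊆ ρ ↔ I ⊆ Res(ρ)`. -/
theorem rc_vs_tau_inclusions {A : Type*} [Fintype A] (hA : 1 < Fintype.card A)
    (k : ℕ) (hk : 1 ≤ k) (ρ : Word A k → Word A k → Prop) (hρ : IsRC k ρ)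
    (I : Set (List A))
    (hI : ∀ u v w : List A, w ∈ I → u ++ w ++ v ∈ I)
    (hIk : ∀ w : List A, w.length = k → w ∈ I) :
    ((∀ u v : Word A k, ρ u v → tauW k I u v) ↔ Lam ρ ⊆ I) ∧
    ((∀ u v : Word A k, ρ u v → tauW k I u v) ↔ Lam' ρ ⊆ I) ∧
    ((∀ u v : Word A k, tauW k I u v → ρ u v) ↔ I ⊆ ResSuf k ρ) :=
  rc_vs_tau_inclusions_general k ρ hρ I hI
end

section
/- If ρ is a special right congruence on A^k (|A| > 1), then Λ_ρ = {lcs(C) : C ∈ A^k/ρ} is a semaphore code. -/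
namespace List

variable {A : Type*} {I : Set (List A)} {l l' s t w : List A}

def IsMinSuffixIn (I : Set (List A)) (l s : List A) : Prop :=
  s <:+ l ∧ s ∈ I ∧ ∀ w ∈ I, w <:+ l → s <:+ w

theorem exists_isMinSuffixIn (hl : l ∈ I) : ∃ s, IsMinSuffixIn I l s := by
  classical
  have hex : ∃ n, ∃ s ∈ I, s <:+ l ∧ s.length = n := ⟨_, l, hl, suffix_refl l, rfl⟩
  obtain ⟨s, hsI, hsl, hlen⟩ := Nat.find_spec hex
  refine ⟨s, hsl, hsI, fun w hwI hwl => suffix_of_suffix_length_le hsl hwl ?_⟩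
  exact hlen ▸ Nat.find_min' hex ⟨w, hwI, hwl, rfl⟩

theorem IsMinSuffixIn.eq_of_suffix (ht : IsMinSuffixIn I l t) (hs : s ∈ I) (hst : s <:+ t) :
    s = t :=
  hst.eq_of_length_le (ht.2.2 s hs (hst.trans ht.1)).length_le

theorem IsMinSuffixIn.suffix_of_suffix (ht : IsMinSuffixIn I l' t) (hl' : l' <:+ l)
    (hw : w <:+ l) (hwI : w ∈ I) : t <:+ w := by
  rcases suffix_or_suffix_of_suffix (ht.1.trans hl') hw with htw | hwt
  · exact htw
  · exact ht.2.2 w hwI (hwt.trans ht.1)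

end List

open List

section

variable {A : Type*} {k : ℕ}

theorem act_suffix (k : ℕ) (a : A) (u : Word A k) : (act k a u).val <:+ u.val ++ [a] :=
  drop_suffix _ _

theorem exists_word_suffix (x : A) {t : List A} (ht : t.length ≤ k) :
    ∃ v : Word A k, t <:+ v.val :=
  ⟨⟨replicate (k - t.length) x ++ t, by simp; omega⟩, suffix_append _ _⟩

theorem List.IsMinSuffixIn.tauW_iff {I : Set (List A)} {u v : Word A k} {s : List A}
    (hs : IsMinSuffixIn I u.val s) : tauW k I u v ↔ s <:+ v.val :=
  ⟨fun ⟨w, hwI, hwu, hwv⟩ => (hs.2.2 w hwI hwu).trans hwv, fun hsv => ⟨s, hs.2.1, hs.1, hsv⟩⟩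

theorem isLcsClass_of_forall_iff_suffix [Nontrivial A] {ρ : Word A k → Word A k → Prop}
    {u : Word A k} {s : List A} (hsu : s <:+ u.val) (hρ : ∀ v, ρ u v ↔ s <:+ v.val) :
    IsLcsClass ρ u s := by
  refine ⟨fun v hv => (hρ v).1 hv, fun w hw => ?_⟩
  have hwu : w <:+ u.val := hw u ((hρ u).2 hsu)
  by_contra hws
  have hlt : s.length < w.length := by
    by_contra! hle
    exact hws (suffix_of_suffix_length_le hwu hsu hle)
  have hcons : ∀ x : A, x :: s <:+ w := by
    intro x
    have hk : (x :: s).length ≤ k := by simpa [u.2] using hlt.trans_le hwu.length_le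
    obtain ⟨v, hv⟩ := exists_word_suffix x hk
    exact suffix_of_suffix_length_le hv (hw v ((hρ v).2 ((suffix_cons x s).trans hv))) hlt
  obtain ⟨x, y, hxy⟩ := exists_pair_ne A
  exact hxy (cons.inj ((suffix_of_suffix_length_le (hcons x) (hcons y) le_rfl).eq_of_length rfl)).1

theorem IsLcsClass.eq {ρ : Word A k → Word A k → Prop} {u : Word A k} {s t : List A}
    (hs : IsLcsClass ρ u s) (ht : IsLcsClass ρ u t) : s = t :=
  (ht.2 s hs.1).eq_of_length (le_antisymm (ht.2 s hs.1).length_le (hs.2 t ht.1).length_le)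

variable [Nontrivial A] {I : Set (List A)} {ρ : Word A k → Word A k → Prop}

theorem isLcsClass_iff_isMinSuffixIn (hI : ∀ u : Word A k, u.val ∈ I)
    (hρ : ∀ u v, ρ u v ↔ tauW k I u v) {u : Word A k} {s : List A} :
    IsLcsClass ρ u s ↔ IsMinSuffixIn I u.val s := by
  have lcs_of_min : ∀ {m}, IsMinSuffixIn I u.val m → IsLcsClass ρ u m := fun hm =>
    isLcsClass_of_forall_iff_suffix hm.1 fun v => (hρ u v).trans hm.tauW_iff
  refine ⟨fun hs => ?_, lcs_of_min⟩
  obtain ⟨m, hm⟩ := exists_isMinSuffixIn (hI u)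
  exact (hs.eq (lcs_of_min hm)) ▸ hm

theorem mem_Lam_iff (hI : ∀ u : Word A k, u.val ∈ I) (hρ : ∀ u v, ρ u v ↔ tauW k I u v)
    {s : List A} : s ∈ Lam ρ ↔ ∃ u : Word A k, IsMinSuffixIn I u.val s :=
  exists_congr fun _ => isLcsClass_iff_isMinSuffixIn hI hρ

end

theorem Lam_semaphore_of_special_general {A : Type*} [Fintype A] (hA : 1 < Fintype.card A)
    (k : ℕ) (ρ : Word A k → Word A k → Prop)
    (hspecial : ∃ I : Set (List A), (∀ u v w : List A, w ∈ I → u ++ w ++ v ∈ I) ∧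
      (∀ w : List A, w.length = k → w ∈ I) ∧
      (∀ u v : Word A k, ρ u v ↔ tauW k I u v)) :
    SuffixCode (Lam ρ) ∧
      ∀ s ∈ Lam ρ, ∀ a : A, ∃ t ∈ Lam ρ, t <:+ s ++ [a] := by
  obtain ⟨I, hideal, hlen, hρ⟩ := hspecial
  have := Fintype.one_lt_card_iff_nontrivial.mp hA
  have hI : ∀ u : Word A k, u.val ∈ I := fun u => hlen u.val u.2
  refine ⟨fun s hs t ht hst => ?_, fun s hs a => ?_⟩
  · obtain ⟨u, hu⟩ := (mem_Lam_iff hI hρ).1 hs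
    obtain ⟨v, hv⟩ := (mem_Lam_iff hI hρ).1 ht
    exact hv.eq_of_suffix hu.2.1 hst
  · obtain ⟨u, hu⟩ := (mem_Lam_iff hI hρ).1 hs
    have hsa : s ++ [a] ∈ I := by simpa using hideal [] [a] s hu.2.1
    obtain ⟨t, ht⟩ := exists_isMinSuffixIn (hI (act k a u))
    exact ⟨t, (mem_Lam_iff hI hρ).2 ⟨_, ht⟩,
      ht.suffix_of_suffix (act_suffix k a u) (suffix_append_self_iff.2 hu.1) hsa⟩

/-- if `ρ` is a special right congruence on `A^k` (`|A| > 1`), then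
`Λ_ρ` is a semaphore code (a suffix code `S` with `S A ⊆ A* S`). -/
theorem Lam_semaphore_of_special {A : Type*} [Fintype A] (hA : 1 < Fintype.card A)
    (k : ℕ) (hk : 1 ≤ k) (ρ : Word A k → Word A k → Prop) (hρ : IsRC k ρ)
    (hspecial : ∃ I : Set (List A), (∀ u v w : List A, w ∈ I → u ++ w ++ v ∈ I) ∧
      (∀ w : List A, w.length = k → w ∈ I) ∧
      (∀ u v : Word A k, ρ u v ↔ tauW k I u v)) :
    SuffixCode (Lam ρ) ∧
      ∀ s ∈ Lam ρ, ∀ a : A, ∃ t ∈ Lam ρ, t <:+ s ++ [a] :=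
  Lam_semaphore_of_special_general hA k ρ hspecial
end

section
/- Given a semaphore code S over A and a fixed s' ∈ S ending in letter a, the set S' = {w ∈ A* : ∃ s ∈ S, sa = ws'} is a maximal suffix code (i.e., a suffix code not properly contained in any other suffix code). -/
/-!
Call `S' = {w | ∃ s ∈ S, s a = w s'}`. It is a suffix code because `w s' ↦ s` is injective and
suffix-monotone. For maximality it suffices that every word `y` is suffix-comparable with some
`w ∈ S'`. Iterating the semaphore property from `s' = s̃' a` gives `t ∈ S` that is a suffix of
`s' y s̃'`, hence comparable with `y s̃'`. If `y s̃' <:+ t`, then `y s' <:+ t a` and `y` is a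
suffix of the `w` with `t a = w s'`. If `t <:+ y s̃'`, one more semaphore step gives `t' ∈ S`
with `t' <:+ t a <:+ y s'`; since `S` is a suffix code, `t' = s'`, so again `t a = w s'` and
`w <:+ y`.
-/

section

variable {A : Type*}

def SuffixComplete (X : Set (List A)) : Prop :=
  ∀ y : List A, ∃ w ∈ X, w <:+ y ∨ y <:+ w

namespace SuffixCode

theorem eq_of_isSuffix_of_isSuffix {S : Set (List A)} (hS : SuffixCode S) {u v z : List A}
    (hu : u ∈ S) (hv : v ∈ S) (huz : u <:+ z) (hvz : v <:+ z) : u = v :=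
  (List.suffix_or_suffix_of_suffix huz hvz).elim (hS u hu v hv) fun h => (hS v hv u hu h).symm

theorem setOf_append_eq_append {S : Set (List A)} (hS : SuffixCode S) (u x : List A) :
    SuffixCode {w : List A | ∃ s ∈ S, s ++ u = w ++ x} := by
  rintro w ⟨s, hs, hsw⟩ v ⟨t, ht, htv⟩ hwv
  have hst : s = t := hS s hs t ht <| List.suffix_append_self_iff.mp <| by
    rw [hsw, htv]
    exact List.suffix_append_self_iff.mpr hwv
  exact List.append_cancel_right (hsw.symm.trans (hst ▸ htv))

theorem eq_of_suffixComplete_of_subset {X Y : Set (List A)} (hY : SuffixCode Y)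
    (hX : SuffixComplete X) (hXY : X ⊆ Y) : Y = X := by
  refine Set.eq_of_subset_of_subset ?_ hXY
  intro y hy
  obtain ⟨w, hw, hwy | hyw⟩ := hX y
  · rwa [← hY w (hXY hw) y hy hwy]
  · rwa [hY y hy w (hXY hw) hyw]

end SuffixCode

theorem exists_mem_isSuffix_append {S : Set (List A)}
    (hsem : ∀ s ∈ S, ∀ a : A, ∃ t ∈ S, t <:+ s ++ [a]) (v : List A) {s : List A}
    (hs : s ∈ S) : ∃ t ∈ S, t <:+ s ++ v := by
  induction v using List.reverseRecOn with
  | nil => exact ⟨s, hs, by simp⟩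
  | append_singleton v b ih =>
    obtain ⟨t, ht, htv⟩ := ih
    obtain ⟨t', ht', ht't⟩ := hsem t ht b
    refine ⟨t', ht', ht't.trans ?_⟩
    rw [← List.append_assoc]
    exact List.suffix_append_self_iff.mpr htv

theorem suffixComplete_setOf_append_singleton_eq {S : Set (List A)} (hcode : SuffixCode S)
    (hsem : ∀ s ∈ S, ∀ a : A, ∃ t ∈ S, t <:+ s ++ [a]) {a : A} {stil : List A}
    (hs' : stil ++ [a] ∈ S) :
    SuffixComplete {w : List A | ∃ s ∈ S, s ++ [a] = w ++ (stil ++ [a])} := by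
  intro y
  have hys' : (y ++ stil) ++ [a] = y ++ (stil ++ [a]) := List.append_assoc _ _ _
  obtain ⟨t, ht, hts'⟩ := exists_mem_isSuffix_append hsem (y ++ stil) hs'
  rcases List.suffix_or_suffix_of_suffix hts' (List.suffix_append _ _) with hty | hyt
  · obtain ⟨t', ht', ht't⟩ := hsem t ht a
    have htay : t ++ [a] <:+ y ++ (stil ++ [a]) := hys' ▸ List.suffix_append_self_iff.mpr hty
    have ht's' : t' = stil ++ [a] :=
      hcode.eq_of_isSuffix_of_isSuffix ht' hs' (ht't.trans htay) (List.suffix_append y _)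
    obtain ⟨w, hw⟩ := ht's' ▸ ht't
    exact ⟨w, ⟨t, ht, hw.symm⟩, Or.inl (List.suffix_append_self_iff.mp (hw ▸ htay))⟩
  · have hyta : y ++ (stil ++ [a]) <:+ t ++ [a] := hys' ▸ List.suffix_append_self_iff.mpr hyt
    obtain ⟨w, hw⟩ := (List.suffix_append y _).trans hyta
    exact ⟨w, ⟨t, ht, hw.symm⟩, Or.inr (List.suffix_append_self_iff.mp (hw ▸ hyta))⟩

end

theorem semaphore_station_maximal_suffix_code_general {A : Type*}
    (S : Set (List A)) (hcode : SuffixCode S)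
    (hsem : ∀ s ∈ S, ∀ a : A, ∃ t ∈ S, t <:+ s ++ [a])
    (s' : List A) (hs' : s' ∈ S) (a : A) (stil : List A) (hlast : s' = stil ++ [a]) :
    SuffixCode {w : List A | ∃ s ∈ S, s ++ [a] = w ++ s'} ∧
      ∀ Y : Set (List A), SuffixCode Y →
        {w : List A | ∃ s ∈ S, s ++ [a] = w ++ s'} ⊆ Y →
        Y = {w : List A | ∃ s ∈ S, s ++ [a] = w ++ s'} := by
  subst hlast
  refine ⟨hcode.setOf_append_eq_append [a] _, fun Y hY hsub => ?_⟩
  exact hY.eq_of_suffixComplete_of_subset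
    (suffixComplete_setOf_append_singleton_eq hcode hsem hs') hsub

/-- given a semaphore code `S` over `A` and a fixed `s' ∈ S` ending
in the letter `a`, the set `S' = {w ∈ A* : ∃ s ∈ S, s a = w s'}` is a maximal
suffix code. -/
theorem semaphore_station_maximal_suffix_code {A : Type*} [Fintype A]
    (S : Set (List A)) (hS : [] ∉ S) (hcode : SuffixCode S)
    (hsem : ∀ s ∈ S, ∀ a : A, ∃ t ∈ S, t <:+ s ++ [a])
    (s' : List A) (hs' : s' ∈ S) (a : A) (stil : List A) (hlast : s' = stil ++ [a]) :
    SuffixCode {w : List A | ∃ s ∈ S, s ++ [a] = w ++ s'} ∧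
      ∀ Y : Set (List A), SuffixCode Y →
        {w : List A | ∃ s ∈ S, s ++ [a] = w ++ s'} ⊆ Y →
        Y = {w : List A | ∃ s ∈ S, s ++ [a] = w ++ s'} :=
  semaphore_station_maximal_suffix_code_general S hcode hsem s' hs' a stil hlast
end

section
/- Let S be a semaphore code over A with associated right action s.a = the unique suffix of sa lying in S, and let π be a positive Bernoulli distribution on A (so π(s) = ∏_{letters a of s} π(a) and ∑_{s∈S} π(s) = 1). Then the vector I = (π(s))_{s∈S} is stationary for the transition matrix T with T_{s,s'} = ∑_{a : s.a = s'} π(a); that is, for every s' ∈ S, ∑_{s∈S} ∑_{a : s.a = s'} π(a) π(s) = π(s'). -/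
/-- The multiplicative extension of a probability distribution on letters to words. -/
def piW {A : Type*} (π : A → ℝ) (w : List A) : ℝ := (w.map π).prod

open Filter Topology

theorem List.concat_suffix_concat_iff {α : Type*} {u v : List α} {a b : α} :
    u ++ [a] <:+ v ++ [b] ↔ a = b ∧ u <:+ v := by
  rw [← List.reverse_prefix]
  simp

section Words

variable {A : Type*} [Fintype A]

@[simps]
def List.consEmbedding (A : Type*) : A × List A ↪ List A where
  toFun p := p.1 :: p.2
  inj' _ _ h := Prod.ext (List.cons.inj h).1 (List.cons.inj h).2

def words (A : Type*) [Fintype A] : ℕ → Finset (List A)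
  | 0 => {[]}
  | n + 1 => (Finset.univ ×ˢ words A n).map (List.consEmbedding A)

theorem mem_words {n : ℕ} {v : List A} : v ∈ words A n ↔ v.length = n := by
  induction n generalizing v with
  | zero => simp [words]
  | succ n ih =>
    simp only [words, Finset.mem_map, Finset.mem_product, Finset.mem_univ, true_and, ih,
      List.consEmbedding_apply]
    constructor
    · rintro ⟨⟨a, w⟩, hw, rfl⟩
      simp [hw]
    · intro hv
      cases v with
      | nil => simp at hv
      | cons a w => exact ⟨(a, w), by simpa using hv, rfl⟩

theorem sum_words_succ {M : Type*} [AddCommMonoid M] (f : List A → M) (n : ℕ) :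
    ∑ v ∈ words A (n + 1), f v = ∑ a, ∑ v ∈ words A n, f (a :: v) := by
  rw [words, Finset.sum_map, Finset.sum_product]
  rfl

theorem hasSum_sum_words {f : List A → ℝ} (hf : Summable f) :
    HasSum (fun n => ∑ v ∈ words A n, f v) (∑' v, f v) := by
  refine ((Equiv.sigmaFiberEquiv List.length).hasSum_iff.mpr hf.hasSum).sigma fun n => ?_
  set L : Set (List A) := {v | v.length = n}
  have h := hasSum_sum_of_ne_finset_zero (f := L.indicator f) (s := words A n)
    (L := SummationFilter.unconditional _) fun v hv =>
      Set.indicator_of_notMem (show v ∉ L from mt mem_words.mpr hv) f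
  rw [Finset.sum_congr rfl fun v hv => Set.indicator_of_mem (show v ∈ L from mem_words.mp hv) f]
    at h
  exact hasSum_subtype_iff_indicator.mpr h

end Words

section Mass

variable {A : Type*} (π : A → ℝ)

theorem piW_cons (a : A) (v : List A) : piW π (a :: v) = π a * piW π v := by
  simp [piW]

theorem piW_append (u v : List A) : piW π (u ++ v) = piW π u * piW π v := by
  simp [piW]

variable {π}

theorem piW_nonneg (hπ : ∀ a, 0 ≤ π a) (v : List A) : 0 ≤ piW π v :=
  List.prod_nonneg fun _ hx => by
    obtain ⟨a, -, rfl⟩ := List.mem_map.mp hx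
    exact hπ a

end Mass

section SuffixCode

variable {A : Type*} {S : Set (List A)}

theorem SuffixCode.eq_of_isSuffix (hS : SuffixCode S) {t t' v : List A} (ht : t ∈ S)
    (ht' : t' ∈ S) (htv : t <:+ v) (ht'v : t' <:+ v) : t = t' := by
  rcases List.suffix_or_suffix_of_suffix htv ht'v with h | h
  · exact hS t ht t' ht' h
  · exact (hS t' ht' t ht h).symm

theorem SuffixCode.eq_iff_isSuffix (hS : SuffixCode S) {t t' v : List A} (ht : t ∈ S)
    (ht' : t' ∈ S) (htv : t <:+ v) : t = t' ↔ t' <:+ v :=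
  ⟨fun h => h ▸ htv, hS.eq_of_isSuffix ht ht' htv⟩

theorem SuffixCode.eq_of_isSuffix_of_concat_mem (hS : SuffixCode S)
    (hsem : ∀ s ∈ S, ∀ a, ∃ t ∈ S, t <:+ s ++ [a]) {u t : List A} {a : A}
    (hua : u ++ [a] ∈ S) (ht : t ∈ S) (htu : t <:+ u) : t = u := by
  obtain ⟨r, hr, hrt⟩ := hsem t ht a
  have hr_eq : r = u ++ [a] :=
    hS r hr _ hua (hrt.trans (List.concat_suffix_concat_iff.mpr ⟨rfl, htu⟩))
  have hlen := hrt.length_le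
  simp only [hr_eq, List.length_append, List.length_singleton] at hlen
  exact htu.eq_of_length (le_antisymm htu.length_le (by omega))

def noSuffixIn (S : Set (List A)) : Set (List A) := {v | ∀ t ∈ S, ¬ t <:+ v}

theorem notMem_noSuffixIn {t v : List A} (ht : t ∈ S) (htv : t <:+ v) : v ∉ noSuffixIn S :=
  fun h => h t ht htv

theorem SuffixCode.indicator_cons_add_indicator_cons (hS : SuffixCode S) (π : A → ℝ)
    (a : A) (v : List A) :
    S.indicator (piW π) (a :: v) + (noSuffixIn S).indicator (piW π) (a :: v)
      = π a * (noSuffixIn S).indicator (piW π) v := by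
  by_cases hv : v ∈ noSuffixIn S
  · rw [Set.indicator_of_mem hv, ← piW_cons]
    by_cases ha : a :: v ∈ S
    · rw [Set.indicator_of_mem ha,
        Set.indicator_of_notMem (notMem_noSuffixIn ha List.suffix_rfl), add_zero]
    · have ha' : a :: v ∈ noSuffixIn S := fun t ht htv => by
        rcases List.suffix_cons_iff.mp htv with rfl | htv
        · exact ha ht
        · exact hv t ht htv
      rw [Set.indicator_of_notMem ha, Set.indicator_of_mem ha', zero_add]
  · obtain ⟨t, ht, htv⟩ : ∃ t ∈ S, t <:+ v := by simpa [noSuffixIn] using hv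
    have ha : a :: v ∉ S := fun ha => by
      have := congrArg List.length (hS t ht _ ha (htv.trans (List.suffix_cons a v)))
      simp only [List.length_cons] at this
      exact absurd htv.length_le (by omega)
    rw [Set.indicator_of_notMem ha, Set.indicator_of_notMem hv,
      Set.indicator_of_notMem (notMem_noSuffixIn ht (htv.trans (List.suffix_cons a v)))]
    simp

theorem indicator_add_indicator_noSuffixIn {u : List A} (π : A → ℝ)
    (hu : ∀ t ∈ S, t <:+ u → t = u) :
    S.indicator (piW π) u + (noSuffixIn S).indicator (piW π) u = piW π u := by
  by_cases huS : u ∈ S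
  · rw [Set.indicator_of_mem huS,
      Set.indicator_of_notMem (notMem_noSuffixIn huS List.suffix_rfl), add_zero]
  · rw [Set.indicator_of_notMem huS,
      Set.indicator_of_mem (show u ∈ noSuffixIn S from fun t ht htu => huS (hu t ht htu ▸ ht)),
      zero_add]

end SuffixCode

section ExtensionMass

variable {A : Type*} [Fintype A] {π : A → ℝ} {S : Set (List A)}

variable (π) in
noncomputable def extMass (T : Set (List A)) (k : ℕ) (u : List A) : ℝ :=
  ∑ w ∈ words A k, T.indicator (piW π) (w ++ u)

theorem extMass_nil (T : Set (List A)) (k : ℕ) :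
    extMass π T k [] = ∑ v ∈ words A k, T.indicator (piW π) v := by
  simp [extMass]

theorem extMass_le_extMass_nil (hπ : ∀ a, 0 ≤ π a) (T : Set (List A)) (k : ℕ) (u : List A) :
    extMass π T k u ≤ extMass π T (k + u.length) [] := by
  rw [extMass, extMass_nil]
  refine (Finset.sum_map (words A k) ⟨(· ++ u), List.append_left_injective u⟩
    (T.indicator (piW π))).symm.trans_le
      (Finset.sum_le_sum_of_subset_of_nonneg ?_ fun v _ _ => ?_)
  · intro v hv
    obtain ⟨w, hw, rfl⟩ := Finset.mem_map.mp hv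
    simp [mem_words.mp hw, mem_words]
  · exact Set.indicator_nonneg (fun v _ => piW_nonneg hπ v) v

theorem SuffixCode.extMass_succ_add_extMass_succ (hS : SuffixCode S) (hsum : ∑ a, π a = 1)
    (k : ℕ) (u : List A) :
    extMass π S (k + 1) u + extMass π (noSuffixIn S) (k + 1) u
      = extMass π (noSuffixIn S) k u := by
  simp only [extMass, sum_words_succ, List.cons_append, ← Finset.sum_add_distrib,
    hS.indicator_cons_add_indicator_cons]
  rw [Finset.sum_comm]
  simp [← Finset.sum_mul, hsum]

theorem SuffixCode.sum_extMass_add_extMass (hS : SuffixCode S) (hsum : ∑ a, π a = 1)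
    (k : ℕ) (u : List A) :
    ∑ j ∈ Finset.range (k + 1), extMass π S j u + extMass π (noSuffixIn S) k u
      = S.indicator (piW π) u + (noSuffixIn S).indicator (piW π) u := by
  induction k with
  | zero => simp [extMass, words]
  | succ k ih =>
    rw [Finset.sum_range_succ, add_assoc, hS.extMass_succ_add_extMass_succ hsum, ih]

theorem tendsto_sum_extMass (hS1 : HasSum (S.indicator (piW π)) 1) (u : List A) :
    Tendsto (fun k => ∑ j ∈ Finset.range (k + 1), extMass π S j u) atTop
      (𝓝 (∑' w, S.indicator (piW π) (w ++ u))) := by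
  have hsummable := hS1.summable.comp_injective (List.append_left_injective u)
  exact ((hasSum_sum_words hsummable).tendsto_sum_nat).comp (tendsto_add_atTop_nat 1)

theorem SuffixCode.tendsto_extMass_noSuffixIn (hS : SuffixCode S) (hπ : ∀ a, 0 ≤ π a)
    (hsum : ∑ a, π a = 1) (hS1 : HasSum (S.indicator (piW π)) 1) (u : List A) :
    Tendsto (fun k => extMass π (noSuffixIn S) k u) atTop (𝓝 0) := by
  have hnil : Tendsto (fun k => extMass π (noSuffixIn S) k []) atTop (𝓝 0) := by
    have hP := tendsto_sum_extMass hS1 []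
    simp only [List.append_nil, hS1.tsum_eq] at hP
    have hsplit k := hS.sum_extMass_add_extMass hsum k []
    rw [indicator_add_indicator_noSuffixIn π fun t _ ht => List.suffix_nil.mp ht] at hsplit
    simpa [eq_sub_of_add_eq' (hsplit _), piW] using hP.const_sub 1
  refine squeeze_zero (fun k => Finset.sum_nonneg fun w _ => ?_)
    (extMass_le_extMass_nil hπ _ · u) (hnil.comp (tendsto_add_atTop_nat u.length))
  exact Set.indicator_nonneg (fun v _ => piW_nonneg hπ v) _

theorem SuffixCode.tsum_indicator_append (hS : SuffixCode S) (hπ : ∀ a, 0 ≤ π a)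
    (hsum : ∑ a, π a = 1) (hS1 : HasSum (S.indicator (piW π)) 1) {u : List A}
    (hu : ∀ t ∈ S, t <:+ u → t = u) :
    ∑' w, S.indicator (piW π) (w ++ u) = piW π u := by
  have hlim := (tendsto_sum_extMass hS1 u).add (hS.tendsto_extMass_noSuffixIn hπ hsum hS1 u)
  simp only [hS.sum_extMass_add_extMass hsum, indicator_add_indicator_noSuffixIn π hu,
    add_zero] at hlim
  exact tendsto_nhds_unique hlim tendsto_const_nhds

end ExtensionMass

theorem hasSum_indicator_of_tsum_subtype_eq {β : Type*} {S : Set β} {f : β → ℝ} {a : ℝ}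
    (h : ∑' s : S, f s = a) (ha : a ≠ 0) : HasSum (S.indicator f) a := by
  have hsummable : Summable fun s : S => f s := by
    by_contra hns
    exact ha (h ▸ tsum_eq_zero_of_not_summable hns)
  have hS := (summable_subtype_iff_indicator (f := f).mp hsummable).hasSum
  rwa [← tsum_subtype, h] at hS

theorem tsum_ite_isSuffix {A : Type*} [DecidableEq A] (S : Set (List A)) (f : List A → ℝ)
    (u : List A) :
    ∑' s : S, (if u <:+ s.val then f s.val else 0) = ∑' w, S.indicator f (w ++ u) := by
  rw [tsum_subtype S fun v => if u <:+ v then f v else 0,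
    ← (List.append_left_injective u).tsum_eq fun v hv => ?_]
  · refine tsum_congr fun w => ?_
    simp [Set.indicator, List.suffix_append]
  · obtain ⟨w, hw⟩ : u <:+ v := by
      by_contra h
      simp [h] at hv
    exact ⟨w, hw⟩

theorem SuffixCode.sum_ite_transition_eq {A : Type*} [Fintype A] [DecidableEq A]
    {S : Set (List A)} (hS : SuffixCode S) {σ : List A → A → List A} {s u : List A} {b : A}
    (hσ : ∀ a, σ s a ∈ S ∧ σ s a <:+ s ++ [a]) (hub : u ++ [b] ∈ S) (f : A → ℝ) :
    ∑ a, (if σ s a = u ++ [b] then f a else 0) = if u <:+ s then f b else 0 := by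
  have hσ_eq a : σ s a = u ++ [b] ↔ b = a ∧ u <:+ s :=
    (hS.eq_iff_isSuffix (hσ a).1 hub (hσ a).2).trans List.concat_suffix_concat_iff
  simp [hσ_eq, ite_and]

/-- let `S` be a semaphore code with right action `s.a` = the unique
suffix of `s a` lying in `S`, and let `π` be a positive Bernoulli distribution on
`A` with `∑_{s ∈ S} π(s) = 1`.  Then `I = (π(s))_{s ∈ S}` is stationary for the
transition matrix `T_{s,s'} = ∑_{a : s.a = s'} π(a)`: for every `s' ∈ S`,
`∑_{s ∈ S} ∑_{a : s.a = s'} π(a) π(s) = π(s')`. -/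
theorem semaphore_stationary_distribution {A : Type*} [Fintype A] [DecidableEq A]
    (π : A → ℝ) (hpos : ∀ a : A, 0 < π a) (hsum : ∑ a : A, π a = 1)
    (S : Set (List A)) (hSne : [] ∉ S) (hcode : SuffixCode S)
    (hsem : ∀ s ∈ S, ∀ a : A, ∃ t ∈ S, t <:+ s ++ [a])
    (σ : List A → A → List A)
    (hσ : ∀ s ∈ S, ∀ a : A, σ s a ∈ S ∧ σ s a <:+ s ++ [a])
    (hS1 : ∑' s : S, piW π s.val = 1) :
    ∀ s' ∈ S,
      (∑' s : S, ∑ a : A, if σ s.val a = s' then π a * piW π s.val else 0)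
        = piW π s' := by
  intro s' hs'
  obtain ⟨u, b, rfl⟩ := (List.eq_nil_or_concat' s').resolve_left (by rintro rfl; exact hSne hs')
  have hmass := hasSum_indicator_of_tsum_subtype_eq hS1 one_ne_zero
  have hu t (ht : t ∈ S) (htu : t <:+ u) : t = u :=
    hcode.eq_of_isSuffix_of_concat_mem hsem hs' ht htu
  calc _ = ∑' s : S, π b * if u <:+ s.val then piW π s.val else 0 := by
        refine tsum_congr fun s => ?_
        rw [hcode.sum_ite_transition_eq (hσ s s.2) hs', mul_ite, mul_zero]
    _ = π b * piW π u := by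
        rw [tsum_mul_left, tsum_ite_isSuffix,
          hcode.tsum_indicator_append (fun a => (hpos a).le) hsum hmass hu]
    _ = piW π (u ++ [b]) := by
        rw [piW_append, mul_comm]
        simp [piW]
end
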